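/- arXiv:math/0702798 — 3 statements merged into one kernel-verified Lean document; each statement's English description precedes it below -/
import Mathlib

section
/- The tangential part ξ̂₂ of P̃ N₂ at a point of S^{2p-1}(r) × S^{q-1}(r₃) satisfies ξ̂₂ = (r₃/r) ξ̂₁, i.e. ξ̂₂ = (r₃/(rR))(y − (2σ/r²)x, x − (2σ/r²)y, 0). -/
open scoped RealInnerProductSpace

noncomputable section

/-- Euclidean space ℝ^n. -/
abbrev Ep (n : ℕ) : Type := EuclideanSpace ℝ (Fin n)

/-- The almost product structure `P̃(x,y,z) = (y, x, ε • z)` on `ℝ^p × ℝ^p × ℝ^q`. -/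
def Pt (p q : ℕ) (ε : ℝ) : Ep p × Ep p × Ep q → Ep p × Ep p × Ep q :=
  fun v => (v.2.1, v.1, ε • v.2.2)

/-- The standard (product / Euclidean) inner product on the triple space. -/
def ip3 {p q : ℕ} (u v : Ep p × Ep p × Ep q) : ℝ :=
  ⟪u.1, v.1⟫ + ⟪u.2.1, v.2.1⟫ + ⟪u.2.2, v.2.2⟫
set_option maxHeartbeats 1000000 in
theorem stmt_9 (p q : ℕ) (hp : 0 < p) (hq : 0 < q) (ε : ℝ) (hε : ε = 1 ∨ ε = -1)
    (r r₃ : ℝ) (hr : 0 < r) (hr₃ : 0 < r₃) (R : ℝ) (hR : R = Real.sqrt (r ^ 2 + r₃ ^ 2))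
    (x y : Ep p) (z : Ep q) (hxy : ‖x‖ ^ 2 + ‖y‖ ^ 2 = r ^ 2) (hz : ‖z‖ ^ 2 = r₃ ^ 2)
    (σ : ℝ) (hσ : σ = ⟪x, y⟫)
    (N₁ N₂ : Ep p × Ep p × Ep q)
    (hN₁ : N₁ = (1 / R) • ((x, y, z) : Ep p × Ep p × Ep q))
    (hN₂ : N₂ = (1 / R) • (((r₃ / r) • x, (r₃ / r) • y, -((r / r₃) • z)) : Ep p × Ep p × Ep q))
    (ξ₁ ξ₂ : Ep p × Ep p × Ep q)
    (hξ₁ : ξ₁ = Pt p q ε N₁ - ip3 (Pt p q ε N₁) N₁ • N₁ - ip3 (Pt p q ε N₁) N₂ • N₂)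
    (hξ₂ : ξ₂ = Pt p q ε N₂ - ip3 (Pt p q ε N₂) N₁ • N₁ - ip3 (Pt p q ε N₂) N₂ • N₂) :
    ξ₂ = (r₃ / r) • ξ₁ ∧
      ξ₂ = (r₃ / (r * R)) •
        ((y - (2 * σ / r ^ 2) • x, x - (2 * σ / r ^ 2) • y, (0 : Ep q)) :
          Ep p × Ep p × Ep q) := by
  have hR2 : R ^ 2 = r ^ 2 + r₃ ^ 2 := by
    rw [hR, Real.sq_sqrt]; positivity
  have hR0 : (0:ℝ) < R := by rw [hR]; positivity
  have hzz : ⟪z, z⟫ = r₃ ^ 2 := by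
    rw [real_inner_self_eq_norm_sq, hz]
  have hne : R ≠ 0 := ne_of_gt hR0
  have hrne : r ≠ 0 := ne_of_gt hr
  have hr₃ne : r₃ ≠ 0 := ne_of_gt hr₃
  have c1 : ip3 (Pt p q ε N₁) N₁ = (2 * σ + ε * r₃ ^ 2) / R ^ 2 := by
    subst hN₁ hσ
    simp only [Pt, Prod.smul_mk, ip3, real_inner_smul_left, real_inner_smul_right,
      real_inner_comm y x, hzz]
    field_simp
    ring
  have c2 : ip3 (Pt p q ε N₁) N₂ = (2 * σ * r₃ / r - ε * r * r₃) / R ^ 2 := by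
    subst hN₁ hN₂ hσ
    simp only [Pt, Prod.smul_mk, smul_neg, ip3, real_inner_smul_left, real_inner_smul_right,
      inner_neg_left, inner_neg_right, real_inner_comm y x, hzz]
    field_simp
    ring
  have c3 : ip3 (Pt p q ε N₂) N₁ = (2 * σ * r₃ / r - ε * r * r₃) / R ^ 2 := by
    subst hN₁ hN₂ hσ
    simp only [Pt, Prod.smul_mk, smul_neg, ip3, real_inner_smul_left, real_inner_smul_right,
      inner_neg_left, inner_neg_right, real_inner_comm y x, hzz]
    field_simp
    ring
  have c4 : ip3 (Pt p q ε N₂) N₂ = (2 * σ * r₃ ^ 2 / r ^ 2 + ε * r ^ 2) / R ^ 2 := by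
    subst hN₂ hσ
    simp only [Pt, Prod.smul_mk, smul_neg, ip3, real_inner_smul_left, real_inner_smul_right,
      inner_neg_left, inner_neg_right, real_inner_comm y x, hzz]
    field_simp
    ring
  rw [c1, c2] at hξ₁
  rw [c3, c4] at hξ₂
  subst hN₁ hN₂ hξ₁ hξ₂
  simp only [Pt, Prod.smul_mk, smul_neg, Prod.mk.injEq, Prod.ext_iff,
    Prod.fst_sub, Prod.snd_sub, Prod.smul_snd, Prod.smul_fst, smul_zero, Prod.mk_sub_mk]
  refine ⟨⟨?_, ?_, ?_⟩, ?_, ?_, ?_⟩ <;> match_scalars <;> field_simp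
  any_goals ring
  · linear_combination (-ε*(r^2+r₃^2)) * hR2
  · linear_combination (2*σ) * hR2
  · linear_combination (2*σ) * hR2
  · linear_combination (-ε*r^2) * hR2
end
end

section
/- On S^{p-1}(r₁) × S^{p-1}(r₂) × S^{q-1}(r₃), the induced operator P satisfies P²X = X − Σ_{α=1}^{3} ⟨X, ξ_α⟩ ξ_α for every tangent vector X, verifying property (2.3)(i) with ε = 1 in codimension 3. -/
/-
On a tangent vector `X = (X₁, Y₁, Z₁)`, `P` swaps `X₁, Y₁`, projects them off `x` and `y`, and
scales `Z₁` by `ε`. With `a = ⟪y, X₁⟫` and `b = ⟪x, Y₁⟫`, applying it twice gives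
`P²X = X - ((a / r₂²) y - (a σ / (r₁² r₂²)) x, (b / r₁²) x - (b σ / (r₁² r₂²)) y, 0)`.
On the other side `ξ₁, ξ₂` are multiples of one vector `η`, with `1 / R² + r₃² / (r² R²) = 1 / r²`,
and `ξ₃ = ζ / r`, where `⟨X, η⟩ = a + b` and `⟨X, ζ⟩ = (r₂ / r₁) b - (r₁ / r₂) a`; comparing
coefficients of `x` and `y` leaves only `r² = r₁² + r₂²`.
-/

open scoped RealInnerProductSpace

noncomputable section

theorem one_div_sq_add_div_mul_sq {r R s : ℝ} (hr : r ≠ 0) (hR : R ≠ 0)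
    (h : R ^ 2 = r ^ 2 + s ^ 2) :
    (1 / R) ^ 2 + (s / (r * R)) ^ 2 = 1 / r ^ 2 := by
  field_simp
  linear_combination -h

section InnerProductSpace

variable {E : Type*} [NormedAddCommGroup E] [InnerProductSpace ℝ E]

theorem sub_smul_sub_inner_smul_of_inner_eq_zero (x y v : E) (s t : ℝ) (hv : ⟪x, v⟫ = 0) :
    (v - (⟪y, v⟫ / t) • y) - (⟪x, v - (⟪y, v⟫ / t) • y⟫ / s) • x =
      v - ((⟪y, v⟫ / t) • y - (⟪y, v⟫ * ⟪x, y⟫ / (s * t)) • x) := by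
  rw [inner_sub_right, real_inner_smul_right, hv]
  match_scalars <;> ring

theorem one_div_sq_smul_add_smul_eq (x y : E) (a b σ r₁ r₂ r : ℝ) (h₁ : r₁ ≠ 0) (h₂ : r₂ ≠ 0)
    (hr : r ^ 2 = r₁ ^ 2 + r₂ ^ 2) :
    (1 / r ^ 2) • ((a + b) • (y - (σ / r₁ ^ 2) • x) +
        ((r₂ / r₁) * b - (r₁ / r₂) * a) • ((σ / (r₁ * r₂)) • x - (r₁ / r₂) • y)) =
      (a / r₂ ^ 2) • y - (a * σ / (r₁ ^ 2 * r₂ ^ 2)) • x := by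
  have hr₀ : r ≠ 0 := (pow_ne_zero_iff two_ne_zero).mp (by rw [hr]; positivity)
  match_scalars
  · field_simp
    linear_combination -a * hr
  · field_simp
    linear_combination a * σ * hr

variable {F : Type*} [AddCommGroup F] [Module ℝ F]

def swapProj (x y : E) (s t ε : ℝ) (v : E × E × F) : E × E × F :=
  (v.2.1 - (⟪x, v.2.1⟫ / s) • x, v.1 - (⟪y, v.1⟫ / t) • y, ε • v.2.2)

theorem swapProj_swapProj (x y : E) (s t ε : ℝ) (hε : ε * ε = 1) (X₁ Y₁ : E) (Z₁ : F)
    (h₁ : ⟪x, X₁⟫ = 0) (h₂ : ⟪y, Y₁⟫ = 0) :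
    swapProj x y s t ε (swapProj x y s t ε (X₁, Y₁, Z₁)) =
      (X₁ - ((⟪y, X₁⟫ / t) • y - (⟪y, X₁⟫ * ⟪x, y⟫ / (s * t)) • x),
        Y₁ - ((⟪x, Y₁⟫ / s) • x - (⟪x, Y₁⟫ * ⟪x, y⟫ / (s * t)) • y), Z₁) := by
  refine Prod.ext ?_ (Prod.ext ?_ ?_)
  · exact sub_smul_sub_inner_smul_of_inner_eq_zero x y X₁ s t h₁
  · rw [real_inner_comm y x, mul_comm s]
    exact sub_smul_sub_inner_smul_of_inner_eq_zero y x Y₁ t s h₂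
  · simp only [swapProj, smul_smul, hε, one_smul]

end InnerProductSpace

section ip3

variable {p q : ℕ}

theorem ip3_smul_right (u v : Ep p × Ep p × Ep q) (c : ℝ) : ip3 u (c • v) = c * ip3 u v := by
  simp only [ip3, Prod.smul_fst, Prod.smul_snd, real_inner_smul_right]
  ring

theorem ip3_smul_right_smul_smul (u v : Ep p × Ep p × Ep q) (c : ℝ) :
    ip3 u (c • v) • (c • v) = c ^ 2 • (ip3 u v • v) := by
  rw [ip3_smul_right, smul_smul, smul_smul]
  congr 1
  ring

end ip3

theorem stmt_18_general (p q : ℕ) (ε : ℝ) (hε : ε = 1 ∨ ε = -1)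
    (r₁ r₂ r₃ : ℝ) (h₁ : 0 < r₁) (h₂ : 0 < r₂)
    (r : ℝ) (hr : r = Real.sqrt (r₁ ^ 2 + r₂ ^ 2))
    (R : ℝ) (hR : R = Real.sqrt (r ^ 2 + r₃ ^ 2))
    (x y : Ep p)
    (σ : ℝ) (hσ : σ = ⟪x, y⟫)
    (P : Ep p × Ep p × Ep q → Ep p × Ep p × Ep q)
    (hP : P = fun v => ((v.2.1 - (⟪x, v.2.1⟫ / r₁ ^ 2) • x,
        v.1 - (⟪y, v.1⟫ / r₂ ^ 2) • y, ε • v.2.2) : Ep p × Ep p × Ep q))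
    (ξ₁ ξ₂ ξ₃ : Ep p × Ep p × Ep q)
    (hξ₁ : ξ₁ = (1 / R) • ((y - (σ / r₁ ^ 2) • x, x - (σ / r₂ ^ 2) • y, (0 : Ep q)) :
        Ep p × Ep p × Ep q))
    (hξ₂ : ξ₂ = (r₃ / (r * R)) • ((y - (σ / r₁ ^ 2) • x, x - (σ / r₂ ^ 2) • y, (0 : Ep q)) :
        Ep p × Ep p × Ep q))
    (hξ₃ : ξ₃ = (1 / r) • (((σ / (r₁ * r₂)) • x - (r₁ / r₂) • y,
        (r₂ / r₁) • x - (σ / (r₁ * r₂)) • y, (0 : Ep q)) : Ep p × Ep p × Ep q))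
    (X₁ Y₁ : Ep p) (Z₁ : Ep q)
    (ht1 : ⟪x, X₁⟫ = 0) (ht2 : ⟪y, Y₁⟫ = 0)
    (X : Ep p × Ep p × Ep q) (hX : X = ((X₁, Y₁, Z₁) : Ep p × Ep p × Ep q)) :
    P (P X) = X - ip3 X ξ₁ • ξ₁ - ip3 X ξ₂ • ξ₂ - ip3 X ξ₃ • ξ₃ := by
  have hr₀ : 0 < r := by rw [hr]; positivity
  have hR₀ : 0 < R := by rw [hR]; positivity
  have hr2 : r ^ 2 = r₁ ^ 2 + r₂ ^ 2 := by rw [hr]; exact Real.sq_sqrt (by positivity)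
  have hR2 : R ^ 2 = r ^ 2 + r₃ ^ 2 := by rw [hR]; exact Real.sq_sqrt (by positivity)
  set a := ⟪y, X₁⟫ with ha
  set b := ⟪x, Y₁⟫ with hb
  set c := (r₂ / r₁) * b - (r₁ / r₂) * a with hc
  set η : Ep p × Ep p × Ep q := (y - (σ / r₁ ^ 2) • x, x - (σ / r₂ ^ 2) • y, 0) with hη
  set ζ : Ep p × Ep p × Ep q :=
    ((σ / (r₁ * r₂)) • x - (r₁ / r₂) • y, (r₂ / r₁) • x - (σ / (r₁ * r₂)) • y, 0) with hζ
  have hPP : P (P X) = (X₁ - ((a / r₂ ^ 2) • y - (a * σ / (r₁ ^ 2 * r₂ ^ 2)) • x),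
      Y₁ - ((b / r₁ ^ 2) • x - (b * σ / (r₁ ^ 2 * r₂ ^ 2)) • y), Z₁) := by
    have hε2 : ε * ε = 1 := by rcases hε with rfl | rfl <;> norm_num
    subst hP hX hσ
    exact swapProj_swapProj x y _ _ ε hε2 X₁ Y₁ Z₁ ht1 ht2
  have hηX : ip3 X η = a + b := by
    simp [hX, hη, ip3, inner_sub_right, real_inner_smul_right, real_inner_comm, ht1, ht2, ha, hb]
  have hζX : ip3 X ζ = c := by
    simp only [ip3, hX, hζ, hc, inner_sub_right, real_inner_smul_right, real_inner_comm, ht1, ht2,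
      inner_zero_right, mul_zero, zero_sub, sub_zero, add_zero]
    ring
  have hξ : ip3 X ξ₁ • ξ₁ + ip3 X ξ₂ • ξ₂ + ip3 X ξ₃ • ξ₃ =
      (1 / r ^ 2) • ((a + b) • η + c • ζ) := by
    rw [hξ₁, hξ₂, hξ₃, ip3_smul_right_smul_smul, ip3_smul_right_smul_smul,
      ip3_smul_right_smul_smul, ← add_smul, one_div_sq_add_div_mul_sq hr₀.ne' hR₀.ne' hR2, hηX,
      hζX, one_div_pow, ← smul_add]
  rw [sub_sub, sub_sub, ← add_assoc, hξ, hPP, hX]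
  refine Prod.ext ?_ (Prod.ext ?_ ?_)
  · simp only [Prod.fst_sub, Prod.smul_fst, Prod.fst_add, hη, hζ, hc]
    rw [one_div_sq_smul_add_smul_eq x y a b σ r₁ r₂ r h₁.ne' h₂.ne' hr2]
  · -- the first component with the roles of `(x, r₁, a)` and `(y, r₂, b)` exchanged
    simp only [Prod.snd_sub, Prod.smul_snd, Prod.snd_add, Prod.fst_sub, Prod.smul_fst,
      Prod.fst_add, hη, hζ, hc]
    rw [mul_comm (r₁ ^ 2), ← one_div_sq_smul_add_smul_eq y x b a σ r₂ r₁ r h₂.ne' h₁.ne'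
      (by rw [hr2, add_comm])]
    congr 2
    module
  · simp [hη, hζ]

theorem stmt_18 (p q : ℕ) (hp : 0 < p) (hq : 0 < q) (ε : ℝ) (hε : ε = 1 ∨ ε = -1)
    (r₁ r₂ r₃ : ℝ) (h₁ : 0 < r₁) (h₂ : 0 < r₂) (h₃ : 0 < r₃)
    (r : ℝ) (hr : r = Real.sqrt (r₁ ^ 2 + r₂ ^ 2))
    (R : ℝ) (hR : R = Real.sqrt (r ^ 2 + r₃ ^ 2))
    (x y : Ep p) (z : Ep q) (hx : ‖x‖ = r₁) (hy : ‖y‖ = r₂) (hz : ‖z‖ = r₃)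
    (σ : ℝ) (hσ : σ = ⟪x, y⟫)
    (P : Ep p × Ep p × Ep q → Ep p × Ep p × Ep q)
    (hP : P = fun v => ((v.2.1 - (⟪x, v.2.1⟫ / r₁ ^ 2) • x,
        v.1 - (⟪y, v.1⟫ / r₂ ^ 2) • y, ε • v.2.2) : Ep p × Ep p × Ep q))
    (ξ₁ ξ₂ ξ₃ : Ep p × Ep p × Ep q)
    (hξ₁ : ξ₁ = (1 / R) • ((y - (σ / r₁ ^ 2) • x, x - (σ / r₂ ^ 2) • y, (0 : Ep q)) :
        Ep p × Ep p × Ep q))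
    (hξ₂ : ξ₂ = (r₃ / (r * R)) • ((y - (σ / r₁ ^ 2) • x, x - (σ / r₂ ^ 2) • y, (0 : Ep q)) :
        Ep p × Ep p × Ep q))
    (hξ₃ : ξ₃ = (1 / r) • (((σ / (r₁ * r₂)) • x - (r₁ / r₂) • y,
        (r₂ / r₁) • x - (σ / (r₁ * r₂)) • y, (0 : Ep q)) : Ep p × Ep p × Ep q))
    (X₁ Y₁ : Ep p) (Z₁ : Ep q)
    (ht1 : ⟪x, X₁⟫ = 0) (ht2 : ⟪y, Y₁⟫ = 0) (ht3 : ⟪z, Z₁⟫ = 0)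
    (X : Ep p × Ep p × Ep q) (hX : X = ((X₁, Y₁, Z₁) : Ep p × Ep p × Ep q)) :
    P (P X) = X - ip3 X ξ₁ • ξ₁ - ip3 X ξ₂ • ξ₂ - ip3 X ξ₃ • ξ₃ :=
  stmt_18_general p q ε hε r₁ r₂ r₃ h₁ h₂ r hr R hR x y σ hσ P hP ξ₁ ξ₂ ξ₃ hξ₁ hξ₂ hξ₃ X₁ Y₁ Z₁ ht1
    ht2 X hX
end
end

section
/- On S^{p-1}(r₁) × S^{p-1}(r₂) × S^{q-1}(r₃), the induced operator P is compatible with the metric: ⟨PX, PY⟩ = ⟨X, Y⟩ − Σ_{α=1}^{3} ⟨X, ξ_α⟩⟨Y, ξ_α⟩ for all tangent vectors X, Y, verifying property (2.3)(viii). -/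
open scoped RealInnerProductSpace

noncomputable section

/-- The standard (product / Euclidean) inner product on the triple space. -/
private lemma key_stmt_19 (r₁ r₂ r₃ r R σ a₁ a₂ b₁ b₂ u v w ε : ℝ)
    (h10 : r₁ ≠ 0) (h20 : r₂ ≠ 0) (hr0 : r ≠ 0) (hR0 : R ≠ 0)
    (hr2 : r ^ 2 = r₁ ^ 2 + r₂ ^ 2) (hR2 : R ^ 2 = r ^ 2 + r₃ ^ 2) (hε2 : ε ^ 2 = 1) :
    v - a₁ / r₁ ^ 2 * a₂ - (a₂ / r₁ ^ 2 * a₁ - a₂ / r₁ ^ 2 * (a₁ / r₁ ^ 2 * r₁ ^ 2)) +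
        (u - b₁ / r₂ ^ 2 * b₂ - (b₂ / r₂ ^ 2 * b₁ - b₂ / r₂ ^ 2 * (b₁ / r₂ ^ 2 * r₂ ^ 2))) +
      ε * (ε * w) =
    u + v + w -
      ((1 / R * (b₁ - σ / r₁ ^ 2 * 0) + 1 / R * (a₁ - σ / r₂ ^ 2 * 0) + 1 / R * 0) *
            (1 / R * (b₂ - σ / r₁ ^ 2 * 0) + 1 / R * (a₂ - σ / r₂ ^ 2 * 0) + 1 / R * 0) +
          (r₃ / (r * R) * (b₁ - σ / r₁ ^ 2 * 0) + r₃ / (r * R) * (a₁ - σ / r₂ ^ 2 * 0) + r₃ / (r * R) * 0) *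
            (r₃ / (r * R) * (b₂ - σ / r₁ ^ 2 * 0) + r₃ / (r * R) * (a₂ - σ / r₂ ^ 2 * 0) + r₃ / (r * R) * 0) +
        (1 / r * (σ / (r₁ * r₂) * 0 - r₁ / r₂ * b₁) + 1 / r * (r₂ / r₁ * a₁ - σ / (r₁ * r₂) * 0) + 1 / r * 0) *
          (1 / r * (σ / (r₁ * r₂) * 0 - r₁ / r₂ * b₂) + 1 / r * (r₂ / r₁ * a₂ - σ / (r₁ * r₂) * 0) + 1 / r * 0)) := by
  have e2 : r₂ ^ 2 = r ^ 2 - r₁ ^ 2 := by linarith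
  have e3 : r₃ ^ 2 = R ^ 2 - r ^ 2 := by linarith
  have h1 : ε * (ε * w) = w := by
    rw [← mul_assoc, ← sq, hε2, one_mul]
  rw [h1]
  have c1 : a₂ / r₁ ^ 2 * a₁ - a₂ / r₁ ^ 2 * (a₁ / r₁ ^ 2 * r₁ ^ 2) = 0 := by
    rw [div_mul_cancel₀ _ (pow_ne_zero 2 h10)]; ring
  have c2 : b₂ / r₂ ^ 2 * b₁ - b₂ / r₂ ^ 2 * (b₁ / r₂ ^ 2 * r₂ ^ 2) = 0 := by
    rw [div_mul_cancel₀ _ (pow_ne_zero 2 h20)]; ring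
  rw [c1, c2]
  have hRR : R * R⁻¹ = 1 := mul_inv_cancel₀ hR0
  have hrr : r * r⁻¹ = 1 := mul_inv_cancel₀ hr0
  have h11 : r₁ * r₁⁻¹ = 1 := mul_inv_cancel₀ h10
  have h22 : r₂ * r₂⁻¹ = 1 := mul_inv_cancel₀ h20
  have E1 : R⁻¹ ^ 2 + r₃ ^ 2 * r⁻¹ ^ 2 * R⁻¹ ^ 2 = r⁻¹ ^ 2 := by
    linear_combination (-(r⁻¹ ^ 2 * R⁻¹ ^ 2)) * hR2 + r⁻¹ ^ 2 * (R * R⁻¹ + 1) * hRR - R⁻¹ ^ 2 * (r * r⁻¹ + 1) * hrr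
  have E2 : r⁻¹ ^ 2 * (1 + r₂ ^ 2 * r₁⁻¹ ^ 2) = r₁⁻¹ ^ 2 := by
    linear_combination (-(r⁻¹ ^ 2 * r₁⁻¹ ^ 2)) * hr2 + r₁⁻¹ ^ 2 * (r * r⁻¹ + 1) * hrr - r⁻¹ ^ 2 * (r₁ * r₁⁻¹ + 1) * h11
  have E3 : r⁻¹ ^ 2 * (1 + r₁ ^ 2 * r₂⁻¹ ^ 2) = r₂⁻¹ ^ 2 := by
    linear_combination (-(r⁻¹ ^ 2 * r₂⁻¹ ^ 2)) * hr2 + r₂⁻¹ ^ 2 * (r * r⁻¹ + 1) * hrr - r⁻¹ ^ 2 * (r₂ * r₂⁻¹ + 1) * h22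
  linear_combination (a₁ + b₁) * (a₂ + b₂) * E1 + a₁ * a₂ * E2 + b₁ * b₂ * E3 - r⁻¹ ^ 2 * (a₁ * b₂ + a₂ * b₁) * (r₂ * r₂⁻¹) * h11 - r⁻¹ ^ 2 * (a₁ * b₂ + a₂ * b₁) * h22


theorem stmt_19 (p q : ℕ) (hp : 0 < p) (hq : 0 < q) (ε : ℝ) (hε : ε = 1 ∨ ε = -1)
    (r₁ r₂ r₃ : ℝ) (h₁ : 0 < r₁) (h₂ : 0 < r₂) (h₃ : 0 < r₃)
    (r : ℝ) (hr : r = Real.sqrt (r₁ ^ 2 + r₂ ^ 2))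
    (R : ℝ) (hR : R = Real.sqrt (r ^ 2 + r₃ ^ 2))
    (x y : Ep p) (z : Ep q) (hx : ‖x‖ = r₁) (hy : ‖y‖ = r₂) (hz : ‖z‖ = r₃)
    (σ : ℝ) (hσ : σ = ⟪x, y⟫)
    (P : Ep p × Ep p × Ep q → Ep p × Ep p × Ep q)
    (hP : P = fun v => ((v.2.1 - (⟪x, v.2.1⟫ / r₁ ^ 2) • x,
        v.1 - (⟪y, v.1⟫ / r₂ ^ 2) • y, ε • v.2.2) : Ep p × Ep p × Ep q))
    (ξ₁ ξ₂ ξ₃ : Ep p × Ep p × Ep q)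
    (hξ₁ : ξ₁ = (1 / R) • ((y - (σ / r₁ ^ 2) • x, x - (σ / r₂ ^ 2) • y, (0 : Ep q)) :
        Ep p × Ep p × Ep q))
    (hξ₂ : ξ₂ = (r₃ / (r * R)) • ((y - (σ / r₁ ^ 2) • x, x - (σ / r₂ ^ 2) • y, (0 : Ep q)) :
        Ep p × Ep p × Ep q))
    (hξ₃ : ξ₃ = (1 / r) • (((σ / (r₁ * r₂)) • x - (r₁ / r₂) • y,
        (r₂ / r₁) • x - (σ / (r₁ * r₂)) • y, (0 : Ep q)) : Ep p × Ep p × Ep q))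
    (X₁ Y₁ : Ep p) (Z₁ : Ep q) (X₂ Y₂ : Ep p) (Z₂ : Ep q)
    (ht1 : ⟪x, X₁⟫ = 0) (ht2 : ⟪y, Y₁⟫ = 0) (ht3 : ⟪z, Z₁⟫ = 0)
    (hs1 : ⟪x, X₂⟫ = 0) (hs2 : ⟪y, Y₂⟫ = 0) (hs3 : ⟪z, Z₂⟫ = 0)
    (X Y : Ep p × Ep p × Ep q) (hX : X = ((X₁, Y₁, Z₁) : Ep p × Ep p × Ep q))
    (hY : Y = ((X₂, Y₂, Z₂) : Ep p × Ep p × Ep q)) :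
    ip3 (P X) (P Y) = ip3 X Y - (ip3 X ξ₁ * ip3 Y ξ₁ + ip3 X ξ₂ * ip3 Y ξ₂ +
      ip3 X ξ₃ * ip3 Y ξ₃) := by
  have hr1 : (0:ℝ) < r₁^2 + r₂^2 := by positivity
  have hr0 : 0 < r := by rw [hr]; positivity
  have hr2 : r ^ 2 = r₁ ^ 2 + r₂ ^ 2 := by rw [hr]; exact Real.sq_sqrt hr1.le
  have hRp : (0:ℝ) < r^2 + r₃^2 := by positivity
  have hR0 : 0 < R := by rw [hR]; positivity
  have hR2 : R ^ 2 = r ^ 2 + r₃ ^ 2 := by rw [hR]; exact Real.sq_sqrt hRp.le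
  have hε2 : ε ^ 2 = 1 := by rcases hε with h | h <;> simp [h]
  have hxx : ⟪x, x⟫ = r₁ ^ 2 := by rw [real_inner_self_eq_norm_sq, hx]
  have hyy : ⟪y, y⟫ = r₂ ^ 2 := by rw [real_inner_self_eq_norm_sq, hy]
  have hyx : ⟪y, x⟫ = σ := by rw [hσ, real_inner_comm]
  have ht1' : ⟪X₁, x⟫ = 0 := by rw [real_inner_comm]; exact ht1
  have ht2' : ⟪Y₁, y⟫ = 0 := by rw [real_inner_comm]; exact ht2
  have hs1' : ⟪X₂, x⟫ = 0 := by rw [real_inner_comm]; exact hs1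
  have hs2' : ⟪Y₂, y⟫ = 0 := by rw [real_inner_comm]; exact hs2
  set a₁ := ⟪x, Y₁⟫ with ha₁
  set a₂ := ⟪x, Y₂⟫ with ha₂
  set b₁ := ⟪y, X₁⟫ with hb₁
  set b₂ := ⟪y, X₂⟫ with hb₂
  have ha₁' : ⟪Y₁, x⟫ = a₁ := real_inner_comm _ _
  have ha₂' : ⟪Y₂, x⟫ = a₂ := real_inner_comm _ _
  have hb₁' : ⟪X₁, y⟫ = b₁ := real_inner_comm _ _
  have hb₂' : ⟪X₂, y⟫ = b₂ := real_inner_comm _ _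
  subst hP hξ₁ hξ₂ hξ₃ hX hY
  simp only [ip3, Prod.smul_fst, Prod.smul_snd, inner_sub_left, inner_sub_right,
    real_inner_smul_left, real_inner_smul_right, inner_zero_left, inner_zero_right,
    hxx, hyy, hyx, ← hσ, ht1, ht2, ht1', ht2', hs1, hs2, hs1', hs2',
    ha₁', ha₂', hb₁', hb₂', ← ha₁, ← ha₂, ← hb₁, ← hb₂]
  exact key_stmt_19 r₁ r₂ r₃ r R σ a₁ a₂ b₁ b₂ ⟪X₁, X₂⟫ ⟪Y₁, Y₂⟫ ⟪Z₁, Z₂⟫ ε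
    h₁.ne' h₂.ne' hr0.ne' hR0.ne' hr2 hR2 hε2
end
end
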